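/- Let a, b, c, k, l, m be nonnegative integers with l ≤ b, l ≤ c and m ≤ l. Set L = a+k+l, B = {−(b−l)+1, −(b−l)+2, ..., −1, 0} and C = {L+1, L+2, ..., L+(c−l)}. Let X, Y ⊆ [L] be disjoint with |X| = m+k and |Y| = m. Then (Σ_Z Δ(B∪X∪Z∪C)·Δ(Y∪Z)) · Δ(B,Y)·Δ(Y,C) = (Σ_Z Δ(X∪Z)·Δ(B∪Y∪Z∪C)) · Δ(B,X)·Δ(X,C), where both sums range over all subsets Z ⊆ [L]∖(X∪Y) with |Z| = l−m. -/
import Mathlib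


/-- `Δ(S) = ∏_{s₁,s₂ ∈ S, s₁ < s₂} (s₂ - s₁)`. -/
def Dset (S : Finset ℤ) : ℤ :=
  ∏ x ∈ S, ∏ y ∈ S.filter (fun y => x < y), (y - x)

/-- `Δ(S,T) = ∏_{s ∈ S, t ∈ T} |t - s|`. -/
def Dpair (S T : Finset ℤ) : ℤ :=
  ∏ s ∈ S, ∏ t ∈ T, |t - s|

lemma Dpair_union_left (S T U : Finset ℤ) (h : Disjoint S T) :
    Dpair (S ∪ T) U = Dpair S U * Dpair T U := by
  unfold Dpair; exact Finset.prod_union h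

lemma Dset_union (S T : Finset ℤ) (h : Disjoint S T) :
    Dset (S ∪ T) = Dset S * Dset T * Dpair S T := by
  unfold Dset Dpair
  rw [Finset.prod_union h]
  have key : ∀ x : ℤ, ∏ y ∈ (S ∪ T).filter (fun y => x < y), (y - x)
      = (∏ y ∈ S.filter (fun y => x < y), (y - x)) *
        ∏ y ∈ T.filter (fun y => x < y), (y - x) := by
    intro x
    rw [Finset.filter_union, Finset.prod_union (Finset.disjoint_filter_filter h)]
  simp only [key]
  rw [Finset.prod_mul_distrib, Finset.prod_mul_distrib]
  have h1 : ∀ x : ℤ, ∀ W : Finset ℤ, ∏ y ∈ W.filter (fun y => x < y), (y - x)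
      = ∏ y ∈ W, (if x < y then y - x else 1) := by
    intro x W; rw [Finset.prod_filter]
  simp only [h1]
  rw [Finset.prod_comm (s := T) (t := S)]
  rw [show ∀ A B C D : ℤ, A * B * (C * D) = A * D * ((B * C)) from by intros; ring]
  congr 1
  rw [← Finset.prod_mul_distrib]
  apply Finset.prod_congr rfl
  intro s hs
  rw [← Finset.prod_mul_distrib]
  apply Finset.prod_congr rfl
  intro t ht
  have hne : s ≠ t := fun hst => Finset.disjoint_left.mp h hs (hst ▸ ht)
  rcases lt_trichotomy s t with hlt | heq | hgt
  · rw [if_pos hlt, if_neg (by omega), abs_of_pos (by omega)]; ring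
  · exact absurd heq hne
  · rw [if_neg (by omega), if_pos hgt, abs_of_neg (by omega)]; ring

theorem sum_identity_case_l_le_b (a b c k l m : ℕ)
    (hlb : l ≤ b) (hlc : l ≤ c) (hml : m ≤ l)
    (L : ℕ) (hL : L = a + k + l)
    (B C : Finset ℤ)
    (hB : B = Finset.Icc ((l : ℤ) - b + 1) 0)
    (hC : C = Finset.Icc ((L : ℤ) + 1) ((L : ℤ) + c - l))
    (X Y : Finset ℤ)
    (hX : X ⊆ Finset.Icc (1 : ℤ) L) (hY : Y ⊆ Finset.Icc (1 : ℤ) L)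
    (hXY : Disjoint X Y)
    (hXcard : X.card = m + k) (hYcard : Y.card = m) :
    (∑ Z ∈ Finset.powersetCard (l - m) (Finset.Icc (1 : ℤ) L \ (X ∪ Y)),
        Dset (B ∪ X ∪ Z ∪ C) * Dset (Y ∪ Z)) * (Dpair B Y * Dpair Y C) =
      (∑ Z ∈ Finset.powersetCard (l - m) (Finset.Icc (1 : ℤ) L \ (X ∪ Y)),
        Dset (X ∪ Z) * Dset (B ∪ Y ∪ Z ∪ C)) * (Dpair B X * Dpair X C) := by
  have dBI : Disjoint B (Finset.Icc (1 : ℤ) L) := by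
    rw [hB]
    rw [Finset.disjoint_left]
    intro x hx hx'
    simp only [Finset.mem_Icc] at hx hx'
    omega
  have dIC : Disjoint (Finset.Icc (1 : ℤ) L) C := by
    rw [hC, Finset.disjoint_left]
    intro x hx hx'
    simp only [Finset.mem_Icc] at hx hx'
    omega
  have dBC : Disjoint B C := by
    rw [hB, hC, Finset.disjoint_left]
    intro x hx hx'
    simp only [Finset.mem_Icc] at hx hx'
    omega
  rw [Finset.sum_mul, Finset.sum_mul]
  apply Finset.sum_congr rfl
  intro Z hZ
  rw [Finset.mem_powersetCard] at hZ
  have hZI : Z ⊆ Finset.Icc (1 : ℤ) L := hZ.1.trans (Finset.sdiff_subset)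
  have dZXY : Disjoint Z (X ∪ Y) := by
    rw [Finset.disjoint_left]
    intro x hx
    exact (Finset.mem_sdiff.mp (hZ.1 hx)).2
  have dXZ : Disjoint X Z := (Finset.disjoint_union_left.mp dZXY.symm).1
  have dYZ : Disjoint Y Z := (Finset.disjoint_union_left.mp dZXY.symm).2
  have dBX : Disjoint B X := dBI.mono_right hX
  have dBY : Disjoint B Y := dBI.mono_right hY
  have dBZ : Disjoint B Z := dBI.mono_right hZI
  have dXC : Disjoint X C := dIC.mono_left hX
  have dYC : Disjoint Y C := dIC.mono_left hY
  have dZC : Disjoint Z C := dIC.mono_left hZI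
  -- disjointness of unions
  have dBX_Z : Disjoint (B ∪ X) Z := Finset.disjoint_union_left.mpr ⟨dBZ, dXZ⟩
  have dBY_Z : Disjoint (B ∪ Y) Z := Finset.disjoint_union_left.mpr ⟨dBZ, dYZ⟩
  have dBXZ_C : Disjoint (B ∪ X ∪ Z) C :=
    Finset.disjoint_union_left.mpr ⟨Finset.disjoint_union_left.mpr ⟨dBC, dXC⟩, dZC⟩
  have dBYZ_C : Disjoint (B ∪ Y ∪ Z) C :=
    Finset.disjoint_union_left.mpr ⟨Finset.disjoint_union_left.mpr ⟨dBC, dYC⟩, dZC⟩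
  rw [Dset_union _ _ dBXZ_C, Dset_union _ _ dBX_Z, Dset_union _ _ dBX,
      Dset_union _ _ dBYZ_C, Dset_union _ _ dBY_Z, Dset_union _ _ dBY,
      Dset_union _ _ dXZ, Dset_union _ _ dYZ,
      Dpair_union_left _ _ C dBX_Z, Dpair_union_left _ _ C dBX,
      Dpair_union_left _ _ Z dBX,
      Dpair_union_left _ _ C dBY_Z, Dpair_union_left _ _ C dBY,
      Dpair_union_left _ _ Z dBY]
  ring
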